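/- Let Ũ be a d×d complex upper-Hessenberg matrix whose columns are pairwise orthogonal, with every column of norm 1 except possibly the last column. Let Ũ = P D Q* be a singular value decomposition with P, Q unitary and D diagonal with nonnegative entries. Then P Q* equals the matrix obtained from Ũ by normalizing its last column. In particular, the closest unitary matrix to Ũ (in Frobenius norm) is obtained by normalizing the last column of Ũ. -/

import Mathlib

open Finset Matrix
open scoped ComplexConjugate

/-!
Write `Ũ = P D Q*`. Since `P` is unitary, `Ũ* Ũ = (Q D Q*)²`, so `Q D Q*` is the positive
semidefinite square root of the Gram matrix `Ũ* Ũ`, and `Ũ = (P Q*)(Q D Q*)`. Orthogonality of the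
columns makes the Gram matrix diagonal with entries the squared column norms, so its square root
is the diagonal matrix `S` of column norms. All of them are positive, hence `P Q* = Ũ S⁻¹`, which
is `Ũ` with every column normalized; only the last column has norm different from `1`.
-/

namespace Matrix

open scoped ComplexOrder MatrixOrder

lemma posSemidef_diagonal_ofReal {m : Type*} [DecidableEq m] {f : m → ℝ} (hf : ∀ i, 0 ≤ f i) :
    (diagonal fun i => (f i : ℂ)).PosSemidef :=
  PosSemidef.diagonal fun i => Complex.zero_le_real.mpr (hf i)

section Columns

variable {n m : Type*} [Fintype n]

noncomputable def colNorm (A : Matrix n m ℂ) (j : m) : ℝ :=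
  Real.sqrt (∑ k, ‖A k j‖ ^ 2)

lemma colNorm_nonneg (A : Matrix n m ℂ) (j : m) : 0 ≤ colNorm A j :=
  Real.sqrt_nonneg _

lemma conjTranspose_mul_self_eq_diagonal_colNorm_sq [DecidableEq m] {A : Matrix n m ℂ}
    (horth : ∀ i j, i ≠ j → ∑ k, conj (A k i) * A k j = 0) :
    Aᴴ * A = diagonal fun j => ((colNorm A j : ℂ)) ^ 2 := by
  ext i j
  rw [mul_apply, diagonal_apply]
  split_ifs with hij
  · subst hij
    rw [colNorm, ← Complex.ofReal_pow, Real.sq_sqrt (sum_nonneg fun k _ => sq_nonneg _)]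
    push_cast
    exact sum_congr rfl fun k _ => Complex.conj_mul' (A k i)
  · exact horth i j hij

end Columns

variable {m : Type*} [Fintype m] [DecidableEq m] {U P Q : Matrix m m ℂ} {D : m → ℝ}

lemma conjTranspose_mul_self_eq_sq_of_svd (hP : P ∈ unitaryGroup m ℂ)
    (hQ : Q ∈ unitaryGroup m ℂ) (hSVD : U = P * diagonal (fun i => (D i : ℂ)) * Qᴴ) :
    Uᴴ * U = (Q * diagonal (fun i => (D i : ℂ)) * Qᴴ) ^ 2 := by
  have hDH : (diagonal fun i => (D i : ℂ))ᴴ = diagonal fun i => (D i : ℂ) := by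
    simp [diagonal_conjTranspose, Pi.star_def]
  have hPP : Pᴴ * P = 1 := mem_unitaryGroup_iff'.mp hP
  have hQQ : Qᴴ * Q = 1 := mem_unitaryGroup_iff'.mp hQ
  simp only [hSVD, sq, conjTranspose_mul, conjTranspose_conjTranspose, hDH, Matrix.mul_assoc]
  rw [← Matrix.mul_assoc Pᴴ P, hPP, Matrix.one_mul, ← Matrix.mul_assoc Qᴴ Q, hQQ,
    Matrix.one_mul]

lemma eq_mul_conjTranspose_mul_of_svd {S : Matrix m m ℂ} (hS : 0 ≤ S) (hSq : S ^ 2 = Uᴴ * U)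
    (hP : P ∈ unitaryGroup m ℂ) (hQ : Q ∈ unitaryGroup m ℂ) (hD : ∀ i, 0 ≤ D i)
    (hSVD : U = P * diagonal (fun i => (D i : ℂ)) * Qᴴ) :
    U = P * Qᴴ * S := by
  have hroot : Q * diagonal (fun i => (D i : ℂ)) * Qᴴ = S :=
    (CFC.sq_eq_sq_iff _ _ ((posSemidef_diagonal_ofReal hD).mul_mul_conjTranspose_same Q).nonneg
      hS).mp (by rw [hSq, conjTranspose_mul_self_eq_sq_of_svd hP hQ hSVD])
  have hQQ : Qᴴ * Q = 1 := mem_unitaryGroup_iff'.mp hQ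
  rw [← hroot, hSVD]
  simp only [Matrix.mul_assoc]
  rw [← Matrix.mul_assoc Qᴴ Q, hQQ, Matrix.one_mul]

theorem mul_conjTranspose_eq_mul_diagonal_inv_colNorm
    (horth : ∀ i j, i ≠ j → ∑ k, conj (U k i) * U k j = 0) (hcol : ∀ j, colNorm U j ≠ 0)
    (hP : P ∈ unitaryGroup m ℂ) (hQ : Q ∈ unitaryGroup m ℂ) (hD : ∀ i, 0 ≤ D i)
    (hSVD : U = P * diagonal (fun i => (D i : ℂ)) * Qᴴ) :
    P * Qᴴ = U * diagonal fun j => ((colNorm U j : ℂ))⁻¹ := by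
  have hU := eq_mul_conjTranspose_mul_of_svd (posSemidef_diagonal_ofReal (colNorm_nonneg U)).nonneg
    (by simp only [conjTranspose_mul_self_eq_diagonal_colNorm_sq horth, sq, diagonal_mul_diagonal])
    hP hQ hD hSVD
  have hinv : (diagonal fun j => (colNorm U j : ℂ)) * (diagonal fun j => ((colNorm U j : ℂ))⁻¹)
      = 1 := by
    rw [diagonal_mul_diagonal, ← diagonal_one]
    exact congrArg diagonal (funext fun j => mul_inv_cancel₀ (by exact_mod_cast hcol j))
  calc P * Qᴴ = P * Qᴴ * (diagonal fun j => (colNorm U j : ℂ)) *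
        diagonal fun j => ((colNorm U j : ℂ))⁻¹ := by rw [Matrix.mul_assoc, hinv, Matrix.mul_one]
    _ = U * diagonal fun j => ((colNorm U j : ℂ))⁻¹ := by rw [← hU]

end Matrix

/-- for an upper-Hessenberg matrix with orthogonal columns, all of
norm 1 except possibly the last, the unitary factor PQ* of any SVD equals the
matrix obtained by normalizing the last column. -/
theorem stmt_5 {d : ℕ} (hd : 0 < d)
    (Ut : Matrix (Fin d) (Fin d) ℂ)
    (horth : ∀ i j : Fin d, i ≠ j → ∑ k, conj (Ut k i) * Ut k j = 0)
    (hnorm : ∀ i : Fin d, (i : ℕ) < d - 1 → ∑ k, ‖Ut k i‖ ^ 2 = 1)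
    (hlast : 0 < Real.sqrt (∑ k, ‖Ut k ⟨d - 1, by omega⟩‖ ^ 2))
    (P Q : Matrix (Fin d) (Fin d) ℂ)
    (hP : P ∈ Matrix.unitaryGroup (Fin d) ℂ) (hQ : Q ∈ Matrix.unitaryGroup (Fin d) ℂ)
    (D : Fin d → ℝ) (hD : ∀ i, 0 ≤ D i)
    (hSVD : Ut = P * Matrix.diagonal (fun i => (D i : ℂ)) * Qᴴ) :
    P * Qᴴ = Matrix.of (fun i j : Fin d =>
      if j = (⟨d - 1, by omega⟩ : Fin d) then
        Ut i j / (Real.sqrt (∑ k, ‖Ut k ⟨d - 1, by omega⟩‖ ^ 2) : ℂ)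
      else Ut i j) := by
  have hcol_one : ∀ j : Fin d, j ≠ ⟨d - 1, by omega⟩ → colNorm Ut j = 1 := fun j hj => by
    have hj' : (j : ℕ) ≠ d - 1 := fun h => hj (Fin.ext h)
    rw [colNorm, hnorm j (by omega), Real.sqrt_one]
  have hcol : ∀ j, colNorm Ut j ≠ 0 := fun j => by
    by_cases hj : j = ⟨d - 1, by omega⟩
    · exact hj ▸ hlast.ne'
    · simp [hcol_one j hj]
  rw [mul_conjTranspose_eq_mul_diagonal_inv_colNorm horth hcol hP hQ hD hSVD]
  ext i j
  rw [mul_diagonal, of_apply]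
  split_ifs with hj
  · rw [div_eq_mul_inv, hj, colNorm]
  · simp [hcol_one j hj]
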